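/- Let c ∈ (0, c_crit) and let h : [0, 1] → (-1, 1) be a solution of the transformed Jang equation dh/ds = F_c(s, h(s)) with h(0) = 0. Then h(s) ≤ 0 for all s ∈ [0, 1]. -/

import Mathlib

/-- The function `φ(r) = e^{r/(2m)-1}(r - 2m)` defining the Kruskal radius implicitly. -/
noncomputable def phi (m r : ℝ) : ℝ := Real.exp (r / (2*m) - 1) * (r - 2*m)

/-- The derivative `φ_r(r) = (r/(2m)) e^{r/(2m)-1}`. -/
noncomputable def phiR (m r : ℝ) : ℝ := (r / (2*m)) * Real.exp (r / (2*m) - 1)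

/-- The critical parameter `c_crit = √(8m/e)`. -/
noncomputable def cCrit (m : ℝ) : ℝ := Real.sqrt (8*m / Real.exp 1)

/-- The right-hand side of Jang's equation on the slice `L_c`:
`f''(u) = jangRHS m c u r (f'(u))` where `r = r(u)` solves `φ(r) = u(u+c)`. -/
noncomputable def jangRHS (m c u r p : ℝ) : ℝ :=
  c * Real.sqrt (2*m / phiR m r + p^2/4) *
      ((1 / phiR m r) * (1/(2*m) - 3/r) - p^2/(2*m*r))
    - ((2*u + c)/(4*m*r)) * p^3
    - ((2*u + c)/(2 * phiR m r)) * (1/(2*m) + 5/r) * p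

/-- The right-hand side `F_c(s,h)` of the transformed Jang equation,
with `r = r_c(s)` solving `φ(r) = (c²/4)(s²-1)`. -/
noncomputable def Fc (m c s r h : ℝ) : ℝ :=
  (c^2/2) * Real.sqrt (2*m*(1 - h^2) / phiR m r + h^2/4) *
      (((1 - h^2) / phiR m r) * (1/(2*m) - 3/r) - h^2/(2*m*r))
    - (c^2*s/(8*m*r)) * h^3
    - (c^2*s/(4 * phiR m r)) * (1/(2*m) + 5/r) * (h*(1 - h^2))

/-!
At a zero `s ∈ [0, 1)` of `h` the right derivative of `h` is `F_c(s, 0)`, which is negative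
because `r_c(s) ≤ 2m < 6m`. So `h`, starting at `0`, can never cross the barrier `0` upwards
(the fencing theorem `image_le_of_deriv_right_lt_deriv_boundary`).
-/

open Set

lemma phiR_pos {m r : ℝ} (hm : 0 < m) (hr : 0 < r) : 0 < phiR m r := by
  unfold phiR
  positivity

lemma le_two_mul_of_phi_nonpos {m r : ℝ} (hphi : phi m r ≤ 0) : r ≤ 2 * m := by
  unfold phi at hphi
  by_contra! hr
  have : 0 < Real.exp (r / (2 * m) - 1) * (r - 2 * m) := mul_pos (Real.exp_pos _) (by linarith)
  linarith

lemma Fc_zero (m c s r : ℝ) :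
    Fc m c s r 0 =
      c ^ 2 / 2 * Real.sqrt (2 * m / phiR m r) * (1 / phiR m r * (1 / (2 * m) - 3 / r)) := by
  simp [Fc]

lemma Fc_zero_neg {m c r : ℝ} (s : ℝ) (hm : 0 < m) (hc : c ≠ 0) (hr : 0 < r) (hr6 : r < 6 * m) :
    Fc m c s r 0 < 0 := by
  have hφ := phiR_pos hm hr
  have hfac : 1 / (2 * m) - 3 / r < 0 := by
    rw [sub_neg, div_lt_div_iff₀ (by positivity) hr]
    linarith
  rw [Fc_zero]
  have hsqrt : 0 < Real.sqrt (2 * m / phiR m r) := Real.sqrt_pos.mpr (by positivity)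
  exact mul_neg_of_pos_of_neg (by positivity) (mul_neg_of_pos_of_neg (by positivity) hfac)

theorem h_nonpositive_general (m c : ℝ) (hm : 0 < m) (hc : c ∈ Set.Ioo 0 (cCrit m))
    (Rc : ℝ → ℝ)
    (hRc : ∀ s, 0 < Rc s ∧ phi m (Rc s) = c^2/4 * (s^2 - 1))
    (h : ℝ → ℝ)
    (hsol : ∀ s ∈ Set.Icc (0:ℝ) 1,
      HasDerivWithinAt h (Fc m c s (Rc s) (h s)) (Set.Icc (0:ℝ) 1) s)
    (hinit : h 0 = 0) :
    ∀ s ∈ Set.Icc (0:ℝ) 1, h s ≤ 0 := by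
  have hcont : ContinuousOn h (Icc 0 1) := fun s hs => (hsol s hs).continuousWithinAt
  have hright : ∀ s ∈ Ico (0 : ℝ) 1, HasDerivWithinAt h (Fc m c s (Rc s) (h s)) (Ici s) s :=
    fun s hs => (hsol s (Ico_subset_Icc_self hs)).mono_of_mem_nhdsWithin (Icc_mem_nhdsGE_of_mem hs)
  have hbarrier : ∀ s ∈ Ico (0 : ℝ) 1, h s = 0 → Fc m c s (Rc s) (h s) < 0 := by
    intro s hs hzero
    obtain ⟨hr, hphi⟩ := hRc s
    have hphi_nonpos : phi m (Rc s) ≤ 0 := by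
      rw [hphi]
      have : s ^ 2 ≤ 1 := by nlinarith [hs.1, hs.2]
      nlinarith [sq_nonneg c]
    rw [hzero]
    exact Fc_zero_neg s hm hc.1.ne' hr (by linarith [le_two_mul_of_phi_nonpos hphi_nonpos])
  exact image_le_of_deriv_right_lt_deriv_boundary (B := fun _ => 0) (B' := fun _ => 0) hcont hright
    hinit.le (fun _ => hasDerivAt_const _ _) hbarrier

/-- A solution `h : [0,1] → (-1,1)` of the transformed Jang equation with
`h(0) = 0` satisfies `h(s) ≤ 0` on `[0,1]`. -/
theorem h_nonpositive (m c : ℝ) (hm : 0 < m) (hc : c ∈ Set.Ioo 0 (cCrit m))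
    (Rc : ℝ → ℝ)
    (hRc : ∀ s, 0 < Rc s ∧ phi m (Rc s) = c^2/4 * (s^2 - 1))
    (h : ℝ → ℝ)
    (hrange : ∀ s ∈ Set.Icc (0:ℝ) 1, h s ∈ Set.Ioo (-1:ℝ) 1)
    (hsol : ∀ s ∈ Set.Icc (0:ℝ) 1,
      HasDerivWithinAt h (Fc m c s (Rc s) (h s)) (Set.Icc (0:ℝ) 1) s)
    (hinit : h 0 = 0) :
    ∀ s ∈ Set.Icc (0:ℝ) 1, h s ≤ 0 :=
  h_nonpositive_general m c hm hc Rc hRc h hsol hinit
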